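/- arXiv:2105.04403 — 6 statements merged into one kernel-verified Lean document; each statement's English description precedes it below -/
import Mathlib

section
/- Every first-countable compact Hausdorff topological space has cardinality at most the cardinality of the continuum (2^ℵ₀). -/
/-!
Fix a countable neighbourhood basis at every point. Closing off along `ω₁` gives a set `M` of
size at most `𝔠` that contains, for every countable `C ⊆ M`, the closure of `C` (at most `𝔠`
points, limits of sequences from `C`) and, for each of the `𝔠` choices of one basic
neighbourhood per point of `C`, a point outside their union if there is one. The first property
makes `M` closed, hence compact. If some `x ∉ M`, finitely many basic neighbourhoods of points
of `M` that miss `x` cover `M`, yet `M` contains a point outside their union.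
-/

open Cardinal Ordinal Set Filter Topology

universe u

section ClosingOff

variable {X : Type u}

def closingOffStage (Φ : Set X → Set X) (i : Ordinal.{u}) : Set X :=
  let S := ⋃ j < i, closingOffStage Φ j
  ⋃ C ∈ {C | C ⊆ S ∧ C.Countable}, Φ C
termination_by i

theorem subset_closingOffStage {Φ : Set X → Set X} {i : Ordinal.{u}} {C : Set X}
    (hCi : C ⊆ ⋃ j < i, closingOffStage Φ j) (hC : C.Countable) :
    Φ C ⊆ closingOffStage Φ i := by
  rw [closingOffStage]
  exact subset_biUnion_of_mem (u := Φ) ⟨hCi, hC⟩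

theorem mk_closingOffStage_le {Φ : Set X → Set X} {κ : Cardinal.{u}} (hκ₀ : ℵ₀ ≤ κ)
    (hκ : κ ^ ℵ₀ = κ) (hΦ : ∀ C, C.Countable → #(Φ C) ≤ κ) {i : Ordinal.{u}} (hi : i < ω₁) :
    #(closingOffStage Φ i) ≤ κ := by
  induction i using WellFoundedLT.induction with
  | ind i IH =>
  set S := ⋃ j < i, closingOffStage Φ j
  have hS : #S ≤ κ := by
    refine mk_biUnion_le_of_le_lift ?_ hκ₀ _ fun j hj => IH j hj (hj.trans hi)
    rw [← ord_aleph, lt_ord, lt_aleph_one_iff] at hi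
    simpa using hi.trans hκ₀
  have hsubsets : #{C | C ⊆ S ∧ C.Countable} ≤ κ := by
    simp_rw [← le_aleph0_iff_set_countable]
    calc _ ≤ max #S ℵ₀ ^ ℵ₀ := mk_bounded_subset_le S ℵ₀
      _ ≤ κ ^ ℵ₀ := power_le_power_right (max_le hS hκ₀)
      _ = κ := hκ
  rw [closingOffStage]
  calc _ ≤ #{C | C ⊆ S ∧ C.Countable} * ⨆ C : {C | C ⊆ S ∧ C.Countable}, #(Φ C) :=
        mk_biUnion_le _ _
    _ ≤ κ * κ := mul_le_mul' hsubsets (ciSup_le' fun C => hΦ C C.2.2)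
    _ = κ := mul_eq_self hκ₀

theorem exists_mk_le_forall_countable_subset {Φ : Set X → Set X} {κ : Cardinal.{u}}
    (hκ₁ : ℵ₁ ≤ κ) (hκ : κ ^ ℵ₀ = κ) (hΦ : ∀ C, C.Countable → #(Φ C) ≤ κ) :
    ∃ M : Set X, #M ≤ κ ∧ ∀ C ⊆ M, C.Countable → Φ C ⊆ M := by
  have hκ₀ : ℵ₀ ≤ κ := (aleph0_le_aleph 1).trans hκ₁
  refine ⟨⋃ i < ω₁, closingOffStage Φ i, ?_, fun C hCM hC => ?_⟩
  · refine mk_biUnion_le_of_le_lift ?_ hκ₀ _ fun i hi => mk_closingOffStage_le hκ₀ hκ hΦ hi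
    simpa using hκ₁
  · have : Countable C := hC
    have hstage : ∀ c : C, ∃ i < ω₁, c.1 ∈ closingOffStage Φ i := by
      simpa using fun c : C => hCM c.2
    choose I hI hcI using hstage
    have hsup : ⨆ c, I c + 1 < ω₁ := lift_iSup_add_one_lt_of_lt_cof (by simp) hI
    refine (subset_closingOffStage (fun c hc => ?_) hC).trans (subset_biUnion_of_mem hsup)
    exact mem_biUnion (lt_iSup_add_one I ⟨c, hc⟩) (hcI ⟨c, hc⟩)

end ClosingOff

theorem mk_arrow_nat_le_continuum {α : Type u} [Countable α] : #(α → ℕ) ≤ 𝔠 := by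
  rw [mk_arrow, ← aleph0_power_aleph0]
  simpa using power_le_power_left aleph0_ne_zero (mk_le_aleph0 (α := α))

section Topology

variable {X : Type u} [TopologicalSpace X]

theorem mk_closure_le_pow_aleph0 [FrechetUrysohnSpace X] [T2Space X] (s : Set X) :
    #(closure s) ≤ #s ^ ℵ₀ := by
  have hseq (x : closure s) : ∃ u : ℕ → X, (∀ n, u n ∈ s) ∧ Tendsto u atTop (𝓝 x.1) :=
    mem_closure_iff_seq_limit.1 x.2
  choose u hus hlim using hseq
  have hinj : Function.Injective fun (x : closure s) (n : ℕ) => (⟨u x n, hus x n⟩ : s) := by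
    intro x y hxy
    have huxy : u x = u y := funext fun n => congrArg Subtype.val (congrFun hxy n)
    exact Subtype.ext (tendsto_nhds_unique (hlim x) (huxy ▸ hlim y))
  simpa using mk_le_of_injective hinj

theorem mk_closure_le_continuum [FrechetUrysohnSpace X] [T2Space X] {s : Set X}
    (hs : s.Countable) : #(closure s) ≤ 𝔠 :=
  calc #(closure s) ≤ #s ^ ℵ₀ := mk_closure_le_pow_aleph0 s
    _ ≤ ℵ₀ ^ ℵ₀ := power_le_power_right hs.le_aleph0
    _ = 𝔠 := aleph0_power_aleph0

theorem isClosed_of_forall_countable_closure_subset [SequentialSpace X] {M : Set X}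
    (hM : ∀ C ⊆ M, C.Countable → closure C ⊆ M) : IsClosed M :=
  IsSeqClosed.isClosed fun u _ hu hlim =>
    hM (range u) (range_subset_iff.2 hu) (countable_range u)
      (mem_closure_of_tendsto hlim (.of_forall mem_range_self))

theorem IsCompact.eq_univ_of_forall_finite_cover [T1Space X] {b : X → ℕ → Set X}
    (hb : ∀ x, (𝓝 x).HasBasis (fun _ => True) (b x)) {M : Set X} (hM : IsCompact M)
    (hcover : ∀ C ⊆ M, C.Finite → ∀ F : C → ℕ,
      M ⊆ ⋃ y : C, b y (F y) → ⋃ y : C, b y (F y) = Set.univ) :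
    M = Set.univ := by
  refine eq_univ_of_forall fun x => by_contra fun hx => ?_
  have hmiss (y : X) (hy : y ∈ M) : ∃ n, b y n ⊆ {x}ᶜ := by
    simpa using (hb y).mem_iff.1 (isOpen_compl_singleton.mem_nhds (ne_of_mem_of_not_mem hy hx))
  choose! F hF using hmiss
  obtain ⟨t, htM, hMt⟩ :=
    hM.elim_nhds_subcover (fun y => b y (F y)) fun y _ => (hb y).mem_of_mem trivial
  rw [← Finset.set_biUnion_coe, biUnion_eq_iUnion] at hMt
  have hunion := hcover t htM t.finite_toSet (fun y => F y) hMt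
  obtain ⟨y, hy⟩ := mem_iUnion.1 (hunion.symm ▸ mem_univ x)
  exact hF y (htM y y.2) hy rfl

end Topology

/-- Arhangel'skii (1969): every first-countable compact Hausdorff space has
cardinality at most that of the continuum. -/
theorem arhangelskii_compact {X : Type u} [TopologicalSpace X] [CompactSpace X]
    [T2Space X] [FirstCountableTopology X] :
    #X ≤ 2 ^ Cardinal.aleph0 := by
  rcases isEmpty_or_nonempty X with _ | _
  · simp
  choose b hb using fun x : X => (𝓝 x).exists_antitone_basis
  let avoid (C : Set X) (F : C → ℕ) : X := Classical.epsilon (· ∉ ⋃ y : C, b y (F y))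
  let Φ (C : Set X) : Set X := closure C ∪ range (avoid C)
  have hΦ (C : Set X) (hC : C.Countable) : #(Φ C) ≤ 𝔠 := by
    have : Countable C := hC
    calc #(Φ C) ≤ 𝔠 + 𝔠 := (mk_union_le _ _).trans <|
          add_le_add (mk_closure_le_continuum hC) (mk_range_le.trans mk_arrow_nat_le_continuum)
      _ = 𝔠 := continuum_add_self
  obtain ⟨M, hMcard, hM⟩ :=
    exists_mk_le_forall_countable_subset aleph_one_le_continuum continuum_power_aleph0 hΦ
  have hMclosed : IsClosed M :=
    isClosed_of_forall_countable_closure_subset fun C hCM hC =>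
      subset_union_left.trans (hM C hCM hC)
  have hMuniv : M = Set.univ := by
    refine hMclosed.isCompact.eq_univ_of_forall_finite_cover (fun x => (hb x).toHasBasis)
      fun C hCM hC F hcover => by_contra fun hU => ?_
    have havoid : avoid C F ∈ M := hM C hCM hC.countable (subset_union_right (mem_range_self F))
    have hmiss : ∃ z, z ∉ ⋃ y : C, b y (F y) := by simpa [eq_univ_iff_forall] using hU
    exact Classical.epsilon_spec hmiss (hcover havoid)
  rw [two_power_aleph0, ← mk_univ, ← hMuniv]
  exact hMcard
end

section
/- For every Hausdorff topological space X, the cardinality of X is at most 2^(χ(X)·L(X)), where χ(X) is the character of X and L(X) is the Lindelöf degree of X. -/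
open Cardinal

/-- `B` is a neighborhood basis at `x` consisting of open sets. -/
def IsNbhdBasisAt {X : Type u} [TopologicalSpace X] (x : X) (B : Set (Set X)) : Prop :=
  (∀ b ∈ B, x ∈ b ∧ IsOpen b) ∧ ∀ U : Set X, IsOpen U → x ∈ U → ∃ b ∈ B, b ⊆ U

/-- The character `χ(X)`: the least infinite cardinal `κ` such that every point
has a neighborhood basis of cardinality at most `κ`. -/
noncomputable def character (X : Type u) [TopologicalSpace X] : Cardinal.{u} :=
  sInf {κ | Cardinal.aleph0 ≤ κ ∧ ∀ x : X, ∃ B : Set (Set X), IsNbhdBasisAt x B ∧ #B ≤ κ}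

/-- The Lindelöf degree `L(X)`: the least infinite cardinal `κ` such that every
open cover has a subcover of cardinality at most `κ`. -/
noncomputable def lindelofDegree (X : Type u) [TopologicalSpace X] : Cardinal.{u} :=
  sInf {κ | Cardinal.aleph0 ≤ κ ∧ ∀ C : Set (Set X), (∀ U ∈ C, IsOpen U) → ⋃₀ C = Set.univ →
    ∃ D ⊆ C, #D ≤ κ ∧ ⋃₀ D = Set.univ}

/-!
Fix `κ ≥ χ(X) + L(X)` and a local base `B x` of size `≤ κ` at every point. Close off under two
`κ`-ary operations: adding the closure of a `κ`-sized set (which has size `≤ 2^κ`, since in a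
Hausdorff space a point of `closure T` is determined by the traces of its basic neighbourhoods on
`T`), and adding a point outside every non-covering family of `≤ κ` basic sets at points already
obtained. Iterating `κ⁺` times yields a set `F` of size `≤ 2^κ` closed under both. As `χ(X) ≤ κ`,
`F` is closed, hence `L(F) ≤ κ`; if `p ∉ F`, a `κ`-sized family of basic sets avoiding `p` would
cover `F`, but then it covers `X` by construction. So `F = X`.
-/

universe u

open Cardinal Set

section CardinalBounds

variable {α : Type u} {c κ : Cardinal.{u}}

theorem mk_union_le_of_le (hc : ℵ₀ ≤ c) {s t : Set α} (hs : #s ≤ c) (ht : #t ≤ c) :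
    #(s ∪ t : Set α) ≤ c :=
  (mk_union_le s t).trans ((add_le_add hs ht).trans_eq (add_eq_self hc))

theorem mk_iUnion_le_of_le (hc : ℵ₀ ≤ c) {ι : Type u} {f : ι → Set α} (hι : #ι ≤ c)
    (hf : ∀ i, #(f i) ≤ c) : #(⋃ i, f i) ≤ c :=
  (mk_iUnion_le f).trans ((mul_le_mul' hι (ciSup_le' hf)).trans_eq (mul_eq_self hc))

theorem mk_bounded_subset_le_two_power (hκ : ℵ₀ ≤ κ) {A : Set α} (hA : #A ≤ 2 ^ κ) :
    #{S : Set α // S ⊆ A ∧ #S ≤ κ} ≤ 2 ^ κ :=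
  calc #{S : Set α // S ⊆ A ∧ #S ≤ κ} ≤ max #A ℵ₀ ^ κ := mk_bounded_subset_le A κ
    _ ≤ (2 ^ κ) ^ κ := power_le_power_right (max_le hA (hκ.trans (cantor κ).le))
    _ = 2 ^ κ := by rw [← power_mul, mul_eq_self hκ]

end CardinalBounds

section ClosingOff

variable {α : Type u} {κ : Cardinal.{u}}

theorem mk_Iio_succ_ord_le (w : (Order.succ κ).ord.ToType) : #(Iio w) ≤ κ :=
  Order.lt_succ_iff.mp (by simpa using mk_Iio_lt w)

theorem exists_gt_of_mk_le_succ_ord (hκ : ℵ₀ ≤ κ) {ι : Type u} (hι : #ι ≤ κ)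
    (f : ι → (Order.succ κ).ord.ToType) : ∃ w, ∀ i, f i < w := by
  obtain ⟨w, hw⟩ := not_isCofinal_iff.mp fun (hcof : IsCofinal (range f)) =>
    (Order.cof_le hcof).not_gt <| by
      rw [Ordinal.cof_toType, (isRegular_succ hκ).cof_ord]
      exact mk_range_le.trans_lt (hι.trans_lt (Order.lt_succ κ))
  exact ⟨w, fun i => hw _ (mem_range_self i)⟩

theorem exists_subset_of_subset_iUnion_succ_ord (hκ : ℵ₀ ≤ κ)
    {F : (Order.succ κ).ord.ToType → Set α} (hF : Monotone F) {S : Set α} (hS : #S ≤ κ)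
    (hSF : S ⊆ ⋃ w, F w) : ∃ w, S ⊆ F w := by
  choose idx hidx using fun a : S => mem_iUnion.mp (hSF a.2)
  obtain ⟨w, hw⟩ := exists_gt_of_mk_le_succ_ord hκ hS idx
  exact ⟨w, fun a ha => hF (hw ⟨a, ha⟩).le (hidx ⟨a, ha⟩)⟩

def closeStep (κ : Cardinal.{u}) (h : Set α → Set α) (A : Set α) : Set α :=
  A ∪ ⋃ S : {S : Set α // S ⊆ A ∧ #S ≤ κ}, h S.1

variable {h : Set α → Set α} {A : Set α}

theorem subset_closeStep : A ⊆ closeStep κ h A :=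
  subset_union_left

theorem apply_subset_closeStep {S : Set α} (hSA : S ⊆ A) (hS : #S ≤ κ) :
    h S ⊆ closeStep κ h A :=
  subset_union_of_subset_right
    (subset_iUnion (fun S' : {S' : Set α // S' ⊆ A ∧ #S' ≤ κ} => h S'.1) ⟨S, hSA, hS⟩) _

theorem mk_closeStep_le (hκ : ℵ₀ ≤ κ) (hh : ∀ S : Set α, #S ≤ κ → #(h S) ≤ 2 ^ κ)
    (hA : #A ≤ 2 ^ κ) : #(closeStep κ h A) ≤ 2 ^ κ :=
  have h2κ : ℵ₀ ≤ (2 : Cardinal) ^ κ := hκ.trans (cantor κ).le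
  mk_union_le_of_le h2κ hA <|
    mk_iUnion_le_of_le h2κ (mk_bounded_subset_le_two_power hκ hA) fun S => hh S.1 S.2.2

/-- The closing-off argument: iterate `closeStep` along `κ⁺`, whose regularity makes the union
closed under `h`. -/
theorem exists_mk_le_two_power_closed_under (hκ : ℵ₀ ≤ κ) (h : Set α → Set α)
    (hh : ∀ S : Set α, #S ≤ κ → #(h S) ≤ 2 ^ κ) :
    ∃ F : Set α, #F ≤ 2 ^ κ ∧ ∀ S ⊆ F, #S ≤ κ → h S ⊆ F := by
  have h2κ : ℵ₀ ≤ (2 : Cardinal) ^ κ := hκ.trans (cantor κ).le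
  let W := (Order.succ κ).ord.ToType
  have : NoMaxOrder W := noMaxOrder (hκ.trans (Order.le_succ κ))
  obtain ⟨F, hF⟩ : ∃ F : W → Set α, ∀ w, F w = closeStep κ h (⋃ v : Iio w, F v) :=
    ⟨WellFoundedLT.fix fun w IH => closeStep κ h (⋃ v : Iio w, IH v v.2), WellFoundedLT.fix_eq _⟩
  have subset_F {v w : W} (hvw : v < w) : F v ⊆ ⋃ v' : Iio w, F v' :=
    subset_iUnion (fun v' : Iio w => F v') ⟨v, hvw⟩
  have hFmono : Monotone F := fun v w hvw => by
    rcases hvw.lt_or_eq with hvw | rfl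
    · exact (subset_F hvw).trans (hF w ▸ subset_closeStep)
    · rfl
  have mk_F (w : W) : #(F w) ≤ 2 ^ κ := by
    induction w using WellFoundedLT.induction with
    | _ w IH =>
      rw [hF w]
      exact mk_closeStep_le hκ hh <| mk_iUnion_le_of_le h2κ
        ((mk_Iio_succ_ord_le w).trans (cantor κ).le) fun v => IH v.1 v.2
  have mk_W : #W ≤ 2 ^ κ := by
    rw [mk_toType, card_ord]
    exact Order.succ_le_of_lt (cantor κ)
  refine ⟨⋃ w, F w, mk_iUnion_le_of_le h2κ mk_W mk_F, fun S hSF hS => ?_⟩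
  obtain ⟨v, hv⟩ := exists_subset_of_subset_iUnion_succ_ord hκ hFmono hS hSF
  obtain ⟨w, hvw⟩ := exists_gt v
  exact subset_iUnion_of_subset w (hF w ▸ apply_subset_closeStep (hv.trans (subset_F hvw)) hS)

end ClosingOff

theorem exists_mk_le_forall_inter_nonempty {α : Type u} (𝓕 : Set (Set α)) :
    ∃ E : Set α, #E ≤ #𝓕 ∧ ∀ s ∈ 𝓕, s.Nonempty → (s ∩ E).Nonempty :=
  ⟨range fun s : {s // s ∈ 𝓕 ∧ s.Nonempty} => s.2.2.some,
    mk_range_le.trans (mk_subtype_mono fun _ h => h.1),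
    fun s hs hne => ⟨hne.some, hne.some_mem, ⟨s, hs, hne⟩, rfl⟩⟩

section Topology

open Filter Topology

variable {X : Type u} [TopologicalSpace X] {κ : Cardinal.{u}}

theorem IsNbhdBasisAt.hasBasis {x : X} {B : Set (Set X)} (hB : IsNbhdBasisAt x B) :
    (𝓝 x).HasBasis (· ∈ B) id :=
  (nhds_basis_opens x).to_hasBasis (fun U ⟨hxU, hU⟩ => hB.2 U hU hxU)
    fun b hb => ⟨b, hB.1 b hb, subset_rfl⟩

theorem IsNbhdBasisAt.exists_subset_mk_le_of_mem_closure {x : X} {B : Set (Set X)}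
    (hB : IsNbhdBasisAt x B) {A : Set X} (hx : x ∈ closure A) :
    ∃ S ⊆ A, #S ≤ #B ∧ x ∈ closure S := by
  choose s hsA hsb using fun b : B => (mem_closure_iff_nhds_basis hB.hasBasis).mp hx b b.2
  refine ⟨range s, range_subset_iff.mpr hsA, mk_range_le, ?_⟩
  exact (mem_closure_iff_nhds_basis hB.hasBasis).mpr fun b hb =>
    ⟨s ⟨b, hb⟩, mem_range_self _, hsb ⟨b, hb⟩⟩

theorem isClosed_of_forall_closure_subset
    (hχ : ∀ x : X, ∃ B : Set (Set X), IsNbhdBasisAt x B ∧ #B ≤ κ) {F : Set X}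
    (hF : ∀ S ⊆ F, #S ≤ κ → closure S ⊆ F) : IsClosed F :=
  isClosed_of_closure_subset fun x hx => by
    obtain ⟨B, hB, hBκ⟩ := hχ x
    obtain ⟨S, hSF, hSB, hxS⟩ := hB.exists_subset_mk_le_of_mem_closure hx
    exact hF S hSF (hSB.trans hBκ) hxS

theorem injOn_image_inter_closure [T2Space X] {B : X → Set (Set X)}
    (hB : ∀ x, IsNbhdBasisAt x (B x)) (T : Set X) :
    InjOn (fun y => (T ∩ ·) '' B y) (closure T) := by
  intro y _ z hz (hyz : (T ∩ ·) '' B y = (T ∩ ·) '' B z)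
  by_contra hne
  obtain ⟨b, hb, c, hc, hbc⟩ :=
    ((hB y).hasBasis.disjoint_iff (hB z).hasBasis).mp (disjoint_nhds_nhds.mpr hne)
  obtain ⟨c', hc', hbc'⟩ : T ∩ b ∈ (T ∩ ·) '' B z := hyz ▸ mem_image_of_mem _ hb
  have hmem : c ∩ c' ∈ 𝓝 z :=
    inter_mem ((hB z).hasBasis.mem_of_mem hc) ((hB z).hasBasis.mem_of_mem hc')
  obtain ⟨t, htcc', htT⟩ := mem_closure_iff_nhds.mp hz _ hmem
  have htb : t ∈ T ∩ b := hbc' ▸ ⟨htT, htcc'.2⟩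
  exact disjoint_left.mp hbc htb.2 htcc'.1

theorem mk_closure_le_two_power [T2Space X] (hκ : ℵ₀ ≤ κ) {B : X → Set (Set X)}
    (hB : ∀ x, IsNbhdBasisAt x (B x)) (hBκ : ∀ x, #(B x) ≤ κ) {T : Set X} (hT : #T ≤ κ) :
    #(closure T) ≤ 2 ^ κ := by
  have mk_powerset_T : #(𝒫 T) ≤ 2 ^ κ :=
    (mk_powerset T).trans_le (power_le_power_left two_ne_zero hT)
  rw [← mk_image_eq_of_injOn _ _ (injOn_image_inter_closure hB T)]
  refine (mk_le_mk_of_subset ?_).trans (mk_bounded_subset_le_two_power hκ mk_powerset_T)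
  rintro _ ⟨y, -, rfl⟩
  exact ⟨by rintro _ ⟨b, -, rfl⟩; exact inter_subset_left, mk_image_le.trans (hBκ y)⟩

theorem IsClosed.exists_subcover_mk_le {F : Set X} (hF : IsClosed F)
    (hL : ∀ C : Set (Set X), (∀ U ∈ C, IsOpen U) → ⋃₀ C = Set.univ →
      ∃ D ⊆ C, #D ≤ κ ∧ ⋃₀ D = Set.univ)
    {C : Set (Set X)} (hC : ∀ U ∈ C, IsOpen U) (hFC : F ⊆ ⋃₀ C) :
    ∃ D ⊆ C, #D ≤ κ ∧ F ⊆ ⋃₀ D := by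
  have hcov : ⋃₀ insert Fᶜ C = Set.univ := by
    rwa [sUnion_insert, ← compl_subset_iff_union, compl_compl]
  obtain ⟨D, hDC, hDκ, hD⟩ :=
    hL (insert Fᶜ C) (forall_mem_insert.mpr ⟨hF.isOpen_compl, hC⟩) hcov
  refine ⟨D ∩ C, inter_subset_right, (mk_le_mk_of_subset inter_subset_left).trans hDκ,
    fun x hx => ?_⟩
  obtain ⟨u, huD, hxu⟩ := hD.symm ▸ Set.mem_univ x
  rcases hDC huD with rfl | huC
  · exact absurd hx hxu
  · exact ⟨u, ⟨huD, huC⟩, hxu⟩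

end Topology

section Arhangelskii

variable {X : Type u} [TopologicalSpace X] {κ : Cardinal.{u}}

theorem IsClosed.eq_univ_of_forall_sUnion_eq_univ [T1Space X] {F : Set X} (hF : IsClosed F)
    {B : X → Set (Set X)} (hB : ∀ x, IsNbhdBasisAt x (B x))
    (hL : ∀ C : Set (Set X), (∀ U ∈ C, IsOpen U) → ⋃₀ C = Set.univ →
      ∃ D ⊆ C, #D ≤ κ ∧ ⋃₀ D = Set.univ)
    (hFcov : ∀ S ⊆ F, #S ≤ κ → ∀ 𝒰 ⊆ ⋃ x ∈ S, B x, #𝒰 ≤ κ → F ⊆ ⋃₀ 𝒰 → ⋃₀ 𝒰 = Set.univ) :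
    F = Set.univ := by
  refine eq_univ_of_forall fun p => by_contra fun hp => ?_
  have hcov : F ⊆ ⋃₀ {b | ∃ x ∈ F, b ∈ B x ∧ p ∉ b} := fun x hx => by
    obtain ⟨b, hb, hbp⟩ := (hB x).hasBasis.mem_iff.mp
      (isOpen_compl_singleton.mem_nhds fun h : x = p => hp (h ▸ hx))
    exact ⟨b, ⟨x, hx, hb, fun hpb => hbp hpb rfl⟩, ((hB x).1 b hb).1⟩
  obtain ⟨D, hDC, hDκ, hFD⟩ := hF.exists_subcover_mk_le hL
    (by rintro b ⟨x, -, hb, -⟩; exact ((hB x).1 b hb).2) hcov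
  choose c hcF hcB hpD using fun b : D => hDC b.2
  have hD : ⋃₀ D = Set.univ := hFcov (range c) (range_subset_iff.mpr hcF)
    (mk_range_le.trans hDκ) D (fun b hb => mem_biUnion (mem_range_self ⟨b, hb⟩) (hcB ⟨b, hb⟩))
    hDκ hFD
  obtain ⟨b, hbD, hpb⟩ := hD.symm ▸ Set.mem_univ p
  exact hpD ⟨b, hbD⟩ hpb

theorem mk_le_two_power_of_nbhdBasis_of_subcover [T2Space X] (hκ : ℵ₀ ≤ κ)
    (hχ : ∀ x : X, ∃ B : Set (Set X), IsNbhdBasisAt x B ∧ #B ≤ κ)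
    (hL : ∀ C : Set (Set X), (∀ U ∈ C, IsOpen U) → ⋃₀ C = Set.univ →
      ∃ D ⊆ C, #D ≤ κ ∧ ⋃₀ D = Set.univ) :
    #X ≤ 2 ^ κ := by
  choose B hB hBκ using hχ
  have h2κ : ℵ₀ ≤ (2 : Cardinal) ^ κ := hκ.trans (cantor κ).le
  choose E hEκ hE using fun S : Set X => exists_mk_le_forall_inter_nonempty
    ((fun 𝒰 => (⋃₀ 𝒰)ᶜ) '' {𝒰 | 𝒰 ⊆ ⋃ x ∈ S, B x ∧ #𝒰 ≤ κ})
  have mk_E {S : Set X} (hS : #S ≤ κ) : #(E S) ≤ 2 ^ κ := by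
    refine (hEκ S).trans (mk_image_le.trans (mk_bounded_subset_le_two_power hκ ?_))
    rw [biUnion_eq_iUnion]
    exact (mk_iUnion_le_of_le hκ hS fun x => hBκ x).trans (cantor κ).le
  obtain ⟨F, hFκ, hF⟩ := exists_mk_le_two_power_closed_under hκ (fun S => closure S ∪ E S)
    fun S hS => mk_union_le_of_le h2κ (mk_closure_le_two_power hκ hB hBκ hS) (mk_E hS)
  have hFclosed : IsClosed F := isClosed_of_forall_closure_subset (fun x => ⟨B x, hB x, hBκ x⟩)
    fun S hSF hS => subset_union_left.trans (hF S hSF hS)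
  have hFuniv : F = Set.univ := hFclosed.eq_univ_of_forall_sUnion_eq_univ hB hL
    fun S hSF hS 𝒰 h𝒰 h𝒰κ hF𝒰 => by
      by_contra hne
      obtain ⟨p, hp𝒰, hpE⟩ := hE S _ ⟨𝒰, ⟨h𝒰, h𝒰κ⟩, rfl⟩ (nonempty_compl.mpr hne)
      exact hp𝒰 (hF𝒰 (hF S hSF hS (subset_union_right hpE)))
  rw [← mk_univ, ← hFuniv]
  exact hFκ

end Arhangelskii

section Invariants

variable (X : Type u) [TopologicalSpace X]

theorem character_mem : character X ∈
    {κ | ℵ₀ ≤ κ ∧ ∀ x : X, ∃ B : Set (Set X), IsNbhdBasisAt x B ∧ #B ≤ κ} :=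
  csInf_mem ⟨max (2 ^ #X) ℵ₀, le_max_right _ _, fun x =>
    ⟨{U | x ∈ U ∧ IsOpen U}, ⟨fun _ h => h, fun U hU hxU => ⟨U, ⟨hxU, hU⟩, subset_rfl⟩⟩,
      ((mk_set_le _).trans_eq mk_set).trans (le_max_left _ _)⟩⟩

theorem lindelofDegree_mem : lindelofDegree X ∈
    {κ | ℵ₀ ≤ κ ∧ ∀ C : Set (Set X), (∀ U ∈ C, IsOpen U) → ⋃₀ C = Set.univ →
      ∃ D ⊆ C, #D ≤ κ ∧ ⋃₀ D = Set.univ} :=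
  csInf_mem ⟨max (2 ^ #X) ℵ₀, le_max_right _ _, fun C _ hC =>
    ⟨C, subset_rfl, ((mk_set_le _).trans_eq mk_set).trans (le_max_left _ _), hC⟩⟩

end Invariants

/-- Arhangel'skii's inequality: `|X| ≤ 2^(χ(X)·L(X))` for every Hausdorff space. -/
theorem arhangelskii_inequality {X : Type u} [TopologicalSpace X] [T2Space X] :
    #X ≤ 2 ^ (character X * lindelofDegree X) := by
  obtain ⟨hχ₀, hχ⟩ := character_mem X
  obtain ⟨hL₀, hL⟩ := lindelofDegree_mem X
  have hmax := mul_eq_max hχ₀ hL₀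
  have hχκ : character X ≤ character X * lindelofDegree X := hmax ▸ le_max_left _ _
  have hLκ : lindelofDegree X ≤ character X * lindelofDegree X := hmax ▸ le_max_right _ _
  exact mk_le_two_power_of_nbhdBasis_of_subcover (hχ₀.trans hχκ)
    (fun x => (hχ x).imp fun _ hB => ⟨hB.1, hB.2.trans hχκ⟩)
    (fun C hC hCU => (hL C hC hCU).imp fun _ hD => ⟨hD.1, hD.2.1.trans hLκ, hD.2.2⟩)
end

section
/- Every first-countable Lindelöf Hausdorff space has cardinality at most 2^ℵ₀. -/
/-!
Fix a countable neighbourhood basis `B a` at every point. Build a set `A` of size at most `𝔠`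
that contains a limit of every convergent sequence in `A` and, for every countable family of basic
neighbourhoods of points of `A` that does not cover the space, a point outside that family.
Such an `A` is obtained by iterating along `ω₁`: every countable subset of the union already lies
in one stage, and each stage has size at most `𝔠 ^ ℵ₀ = 𝔠`. Then `A` is sequentially closed, hence
closed and Lindelöf. If some `z ∉ A`, cover `A` by basic neighbourhoods missing `z` and extract a
countable subcover; it does not cover `z`, so `A` contains a point outside it, a contradiction.
-/

open Cardinal Set Filter Topology

universe u

section CountableArity

open Ordinal

variable {α : Type u} (O : (ℕ → α) → Set α)

def IsClosedUnderSeqOp (T : Set α) : Prop :=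
  ∀ x : ℕ → α, (∀ n, x n ∈ T) → O x ⊆ T

noncomputable def seqOpClosureStage (S : Set α) (o : Ordinal.{u}) : Set α :=
  S ∪ ⋃ x : ℕ → ↥(⋃ j < o, seqOpClosureStage S j), O (Subtype.val ∘ x)
termination_by o
decreasing_by all_goals assumption

variable {O} {S : Set α}

lemma subset_seqOpClosureStage (o : Ordinal.{u}) : S ⊆ seqOpClosureStage O S o := by
  rw [seqOpClosureStage]
  exact subset_union_left

lemma seqOp_subset_seqOpClosureStage {o : Ordinal.{u}} (x : ℕ → α)
    (hx : ∀ n, x n ∈ ⋃ j < o, seqOpClosureStage O S j) : O x ⊆ seqOpClosureStage O S o := by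
  rw [seqOpClosureStage]
  exact (subset_iUnion (fun y : ℕ → ↥(⋃ j < o, seqOpClosureStage O S j) => O (Subtype.val ∘ y))
    fun n => ⟨x n, hx n⟩).trans subset_union_right

lemma mk_seqOpClosureStage_le {κ : Cardinal.{u}} (hκ₀ : ℵ₀ ≤ κ) (hκ : κ ^ ℵ₀ ≤ κ)
    (hO : ∀ x, #(O x) ≤ κ) (hS : #S ≤ κ) (o : Ordinal.{u}) (ho : o.card ≤ κ) :
    #(seqOpClosureStage O S o) ≤ κ := by
  induction o using WellFoundedLT.induction with
  | _ o ih =>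
  have hU : #↥(⋃ j < o, seqOpClosureStage O S j) ≤ κ :=
    mk_biUnion_le_of_le ho hκ₀ _ fun j hj => ih j hj ((card_le_card hj.le).trans ho)
  have hseq : #(ℕ → ↥(⋃ j < o, seqOpClosureStage O S j)) ≤ κ := by
    simpa [mk_arrow] using (power_le_power_right hU).trans hκ
  rw [seqOpClosureStage]
  calc _ ≤ #S + #(⋃ x : ℕ → ↥(⋃ j < o, seqOpClosureStage O S j), O (Subtype.val ∘ x)) :=
        mk_union_le _ _
    _ ≤ κ + κ * κ :=
        add_le_add hS ((mk_iUnion_le _).trans (mul_le_mul' hseq (ciSup_le' fun x => hO _)))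
    _ = κ := by rw [mul_eq_self hκ₀, add_eq_self hκ₀]

lemma exists_forall_lt_of_forall_lt_omega_one {f : ℕ → Ordinal.{u}} (hf : ∀ n, f n < ω₁) :
    ∃ o < ω₁, ∀ n, f n < o :=
  ⟨⨆ n, Order.succ (f n), iSup_lt_omega_one fun n => (isSuccLimit_omega 1).succ_lt (hf n),
    fun n => (Order.lt_succ (f n)).trans_le (Ordinal.le_iSup (fun n => Order.succ (f n)) n)⟩

theorem exists_superset_isClosedUnderSeqOp_mk_le {κ : Cardinal.{u}} (hκ₁ : ℵ₁ ≤ κ)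
    (hκ : κ ^ ℵ₀ ≤ κ) (hO : ∀ x, #(O x) ≤ κ) (hS : #S ≤ κ) :
    ∃ T, S ⊆ T ∧ IsClosedUnderSeqOp O T ∧ #T ≤ κ := by
  have hκ₀ : ℵ₀ ≤ κ := aleph0_lt_aleph_one.le.trans hκ₁
  refine ⟨⋃ o < ω₁, seqOpClosureStage O S o, ?_, ?_, ?_⟩
  · exact (subset_seqOpClosureStage 0).trans (subset_biUnion_of_mem (omega_pos 1))
  · intro x hx
    have hstage : ∀ n, ∃ o < ω₁, x n ∈ seqOpClosureStage O S o := fun n => by simpa using hx n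
    choose f hf hxf using hstage
    obtain ⟨o, ho, hfo⟩ := exists_forall_lt_of_forall_lt_omega_one hf
    exact (seqOp_subset_seqOpClosureStage x fun n => mem_biUnion (hfo n) (hxf n)).trans
      (subset_biUnion_of_mem ho)
  · refine mk_biUnion_le_of_le (by rw [card_omega]; exact hκ₁) hκ₀ _ fun o ho => ?_
    exact mk_seqOpClosureStage_le hκ₀ hκ hO hS o ((lt_omega_iff_card_lt.1 ho).le.trans hκ₁)

end CountableArity

section Topology

variable {X : Type u} [TopologicalSpace X] [Nonempty X] (B : X → ℕ → Set X)

/-- The limits of `x`, together with, for each choice `n` of indices, a point outside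
`⋃ k, B (x k) (n k)` (an arbitrary point if that union is the whole space). -/
noncomputable def limitsAndEscapes (x : ℕ → X) : Set X :=
  {y | Tendsto x atTop (𝓝 y)} ∪
    range fun n : ℕ → ℕ => Classical.epsilon fun y => y ∉ ⋃ k, B (x k) (n k)

variable {B}

lemma mk_limitsAndEscapes_le [T2Space X] (x : ℕ → X) : #(limitsAndEscapes B x) ≤ 𝔠 := by
  have hlim : #{y | Tendsto x atTop (𝓝 y)} ≤ 1 :=
    mk_le_one_iff_set_subsingleton.2 fun _ hy _ hz => tendsto_nhds_unique hy hz
  have hesc : #(range fun n : ℕ → ℕ => Classical.epsilon fun y => y ∉ ⋃ k, B (x k) (n k)) ≤ 𝔠 := by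
    simpa [mk_arrow, aleph0_power_aleph0] using mk_range_le_lift (f := fun n : ℕ → ℕ =>
      Classical.epsilon fun y => y ∉ ⋃ k, B (x k) (n k))
  calc _ ≤ 1 + 𝔠 := (mk_union_le _ _).trans (add_le_add hlim hesc)
    _ = 𝔠 := mod_cast nat_add_continuum 1

lemma IsClosedUnderSeqOp.isSeqClosed {A : Set X}
    (hA : IsClosedUnderSeqOp (limitsAndEscapes B) A) : IsSeqClosed A :=
  fun x _ hx hlim => hA x hx (Or.inl hlim)

lemma IsClosedUnderSeqOp.eq_univ [T1Space X] [LindelofSpace X]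
    (hB : ∀ a, (𝓝 a).HasBasis (fun _ => True) (B a)) {A : Set X} (hA : IsClosed A)
    (hne : A.Nonempty) (hAB : IsClosedUnderSeqOp (limitsAndEscapes B) A) : A = Set.univ := by
  by_contra hA_ne
  obtain ⟨z, hz⟩ := (ne_univ_iff_exists_notMem A).1 hA_ne
  have hsep : ∀ a ∈ A, ∃ n, B a n ⊆ {z}ᶜ := fun a ha =>
    ((hB a).mem_iff.1 (isOpen_compl_singleton.mem_nhds (ne_of_mem_of_not_mem ha hz))).imp
      fun _ => And.right
  choose! n hn using hsep
  obtain ⟨t, htc, htA, hcover⟩ :=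
    hA.isLindelof.elim_nhds_subcover (fun a => B a (n a)) fun a _ => (hB a).mem_of_mem trivial
  have ht : t.Nonempty := by
    obtain ⟨a, ha⟩ := hne.mono hcover
    obtain ⟨b, hb, -⟩ := mem_iUnion₂.1 ha
    exact ⟨b, hb⟩
  obtain ⟨x, rfl⟩ := htc.exists_eq_range ht
  have hxA : ∀ k, x k ∈ A := fun k => htA _ (mem_range_self k)
  have hescape : ∃ y, y ∉ ⋃ k, B (x k) (n (x k)) :=
    ⟨z, by simpa using fun k hzk => hn _ (hxA k) hzk rfl⟩
  have hmem := hcover (hAB x hxA (Or.inr ⟨n ∘ x, rfl⟩))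
  simp only [mem_range, iUnion_exists, iUnion_iUnion_eq'] at hmem
  exact Classical.epsilon_spec hescape hmem

end Topology

/-- Every first-countable Lindelöf Hausdorff space has cardinality at most `2^ℵ₀`. -/
theorem firstCountable_lindelof_card_le {X : Type u} [TopologicalSpace X] [T2Space X]
    [LindelofSpace X] [FirstCountableTopology X] :
    #X ≤ 2 ^ Cardinal.aleph0 := by
  rw [two_power_aleph0]
  rcases isEmpty_or_nonempty X with hX | hX
  · simp
  choose B hB using fun a : X => (𝓝 a).exists_antitone_basis
  obtain ⟨A, hx₀, hAB, hA⟩ := exists_superset_isClosedUnderSeqOp_mk_le aleph_one_le_continuum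
    continuum_power_aleph0.le mk_limitsAndEscapes_le
    ((mk_singleton (Classical.arbitrary X)).trans_le (mod_cast (nat_lt_continuum 1).le))
  have hA_univ : A = Set.univ := hAB.eq_univ (fun a => (hB a).toHasBasis)
    hAB.isSeqClosed.isClosed ((singleton_nonempty _).mono hx₀)
  rwa [← mk_univ, ← hA_univ]
end

section
/- A compact Hausdorff space with a countable network is metrizable (equivalently, second countable). -/
/-- `N` is a network for `X`. -/
def IsNetwork {X : Type u} [TopologicalSpace X] (N : Set (Set X)) : Prop :=
  ∀ x : X, ∀ U : Set X, IsOpen U → x ∈ U → ∃ n ∈ N, x ∈ n ∧ n ⊆ U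

/-!
Choose, for every pair of network members that can be separated by disjoint open sets, one such
separating pair of open sets. These countably many open sets generate a coarser topology that is
still Hausdorff, because two distinct points lie in network members inside disjoint open
neighbourhoods. A compact topology admits no strictly coarser Hausdorff topology, so the two
topologies coincide, and the original one is second countable, hence metrizable by Urysohn.
-/

open TopologicalSpace Topology

theorem TopologicalSpace.eq_of_le_of_compactSpace_of_t2Space {X : Type*}
    {t t' : TopologicalSpace X} [@CompactSpace X t] [@T2Space X t'] (h : t ≤ t') : t = t' := by
  refine le_antisymm h fun s (hs : IsOpen[t] s) => ?_
  have hcompact : @IsCompact X t sᶜ :=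
    @IsClosed.isCompact X t _ _ (@IsOpen.isClosed_compl X t s hs)
  replace hcompact : @IsCompact X t' sᶜ := by
    simpa using @IsCompact.image X X t t' _ id hcompact (continuous_id_of_le h)
  simpa using hcompact.isClosed.isOpen_compl

theorem IsNetwork.exists_countable_t2Space_generateFrom {X : Type*} [TopologicalSpace X]
    [T2Space X] {N : Set (Set X)} (hN : IsNetwork N) (hNc : N.Countable) :
    ∃ S : Set (Set X), S.Countable ∧ (∀ s ∈ S, IsOpen s) ∧
      @T2Space X (generateFrom S) := by
  let P : Set (Set X × Set X) := {p | p ∈ N ×ˢ N ∧ SeparatedNhds p.1 p.2}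
  choose! U V hU hV hAU hBV hUV using fun p (hp : p ∈ P) => hp.2
  refine ⟨U '' P ∪ V '' P, ?_, ?_, ?_⟩
  · have hPc : P.Countable := (hNc.prod hNc).mono fun p hp => hp.1
    exact (hPc.image U).union (hPc.image V)
  · rintro s (⟨p, hp, rfl⟩ | ⟨p, hp, rfl⟩)
    exacts [hU p hp, hV p hp]
  · refine @T2Space.mk X (generateFrom _) fun x y hxy => ?_
    obtain ⟨U₀, V₀, hU₀, hV₀, hxU₀, hyV₀, hU₀V₀⟩ := t2_separation hxy
    obtain ⟨A, hA, hxA, hAU₀⟩ := hN x U₀ hU₀ hxU₀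
    obtain ⟨B, hB, hyB, hBV₀⟩ := hN y V₀ hV₀ hyV₀
    have hp : (A, B) ∈ P := ⟨⟨hA, hB⟩, U₀, V₀, hU₀, hV₀, hAU₀, hBV₀, hU₀V₀⟩
    exact ⟨U (A, B), V (A, B), isOpen_generateFrom_of_mem (.inl ⟨_, hp, rfl⟩),
      isOpen_generateFrom_of_mem (.inr ⟨_, hp, rfl⟩), hAU _ hp hxA, hBV _ hp hyB, hUV _ hp⟩

/-- Arhangel'skii's metrization theorem: a compact Hausdorff space with a countable
network is metrizable (equivalently, second countable). -/
theorem compact_countable_network_metrizable {X : Type u} [TopologicalSpace X]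
    [CompactSpace X] [T2Space X]
    (h : ∃ N : Set (Set X), N.Countable ∧ IsNetwork N) :
    TopologicalSpace.MetrizableSpace X ∧ SecondCountableTopology X := by
  obtain ⟨N, hNc, hN⟩ := h
  obtain ⟨S, hSc, hSo, hS⟩ := hN.exists_countable_t2Space_generateFrom hNc
  have hX : ‹TopologicalSpace X› = generateFrom S :=
    eq_of_le_of_compactSpace_of_t2Space (le_generateFrom hSo)
  have : SecondCountableTopology X := hX ▸ SecondCountableTopology.mk' hSc
  exact ⟨metrizableSpace_of_t3_secondCountable X, this⟩
end

section
/- A regular Hausdorff space has a countable network if and only if it is the continuous image of a separable metrizable space. -/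
open Set Function TopologicalSpace Topology

universe u

section Network

variable {X : Type u} [TopologicalSpace X]

theorem IsNetwork.mono {N M : Set (Set X)} (hN : IsNetwork N) (hNM : N ⊆ M) : IsNetwork M :=
  fun x U hU hxU ↦ (hN x U hU hxU).imp fun _ ⟨hn, hxn⟩ ↦ ⟨hNM hn, hxn⟩

theorem TopologicalSpace.IsTopologicalBasis.isNetwork {B : Set (Set X)}
    (hB : IsTopologicalBasis B) : IsNetwork B :=
  fun _ _ hU hxU ↦ hB.exists_subset_of_mem_open hxU hU

theorem IsNetwork.image {Y : Type*} [TopologicalSpace Y] {N : Set (Set Y)} (hN : IsNetwork N)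
    {f : Y → X} (hf : Continuous f) (hsurj : Surjective f) : IsNetwork ((f '' ·) '' N) := by
  intro x U hU hxU
  obtain ⟨y, rfl⟩ := hsurj x
  obtain ⟨n, hn, hyn, hnU⟩ := hN y (f ⁻¹' U) (hU.preimage hf) hxU
  exact ⟨f '' n, mem_image_of_mem _ hn, mem_image_of_mem f hyn, image_subset_iff.mpr hnU⟩

end Network

section Address

variable {X : Type u} [TopologicalSpace X] (e : ℕ → Set X)

def IsAddress (s : ℕ → ℕ) (x : X) : Prop :=
  (∀ n, x ∈ e (s n)) ∧ ∀ U, IsOpen U → x ∈ U → ∃ n, e (s n) ⊆ U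

def addressSpace : Set (ℕ → ℕ) :=
  {s | ∃ x, IsAddress e s x}

noncomputable def addressSpace.point (s : addressSpace e) : X :=
  s.2.choose

theorem addressSpace.isAddress_point (s : addressSpace e) : IsAddress e s (point e s) :=
  s.2.choose_spec

theorem addressSpace.continuous_point : Continuous (point e) := by
  refine continuous_iff_continuousAt.mpr fun s ↦ (nhds_basis_opens _).tendsto_right_iff.mpr ?_
  rintro V ⟨hsV, hV⟩
  obtain ⟨n, hn⟩ := (isAddress_point e s).2 V hV hsV
  have hcoord : Continuous fun t : addressSpace e ↦ t.1 n :=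
    (continuous_apply n).comp continuous_subtype_val
  have hcyl : IsOpen {t : addressSpace e | t.1 n = s.1 n} :=
    hcoord.isOpen_preimage {s.1 n} (isOpen_discrete _)
  filter_upwards [hcyl.mem_nhds rfl] with t (ht : t.1 n = s.1 n)
  exact hn (ht ▸ (isAddress_point e t).1 n)

variable {e}

theorem IsAddress.eq [T2Space X] {s : ℕ → ℕ} {x y : X} (hx : IsAddress e s x)
    (hy : IsAddress e s y) : x = y := by
  by_contra hne
  obtain ⟨U, V, hU, hV, hxU, hyV, hUV⟩ := t2_separation hne
  obtain ⟨n, hn⟩ := hx.2 U hU hxU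
  exact disjoint_left.mp hUV (hn (hy.1 n)) hyV

theorem exists_isAddress (he : IsNetwork (range e)) (x : X) : ∃ s, IsAddress e s x := by
  have hmem : ∀ U, IsOpen U → x ∈ U → ∃ m, x ∈ e m ∧ e m ⊆ U := fun U hU hxU ↦ by
    obtain ⟨_, ⟨m, rfl⟩, hxm, hmU⟩ := he x U hU hxU
    exact ⟨m, hxm, hmU⟩
  obtain ⟨m, hm, -⟩ := hmem univ isOpen_univ (mem_univ x)
  obtain ⟨s, hs⟩ := (to_countable {m | x ∈ e m}).exists_eq_range ⟨m, hm⟩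
  refine ⟨s, fun n ↦ (hs ▸ mem_range_self n : s n ∈ {m | x ∈ e m}), fun U hU hxU ↦ ?_⟩
  obtain ⟨m, hxm, hmU⟩ := hmem U hU hxU
  obtain ⟨n, rfl⟩ : m ∈ range s := hs ▸ hxm
  exact ⟨n, hmU⟩

theorem addressSpace.surjective_point [T2Space X] (he : IsNetwork (range e)) :
    Surjective (point e) := fun x ↦
  let ⟨s, hs⟩ := exists_isAddress he x
  ⟨⟨s, x, hs⟩, (isAddress_point e ⟨s, x, hs⟩).eq hs⟩

end Address

theorem exists_continuous_surjective_of_countable_network {X : Type u} [TopologicalSpace X]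
    [T2Space X] {N : Set (Set X)} (hNc : N.Countable) (hN : IsNetwork N) :
    ∃ (Z : Set (ℕ → ℕ)) (f : Z → X), Continuous f ∧ Surjective f := by
  obtain ⟨e, he⟩ := (hNc.insert ∅).exists_eq_range (insert_nonempty _ _)
  exact ⟨addressSpace e, addressSpace.point e, addressSpace.continuous_point e,
    addressSpace.surjective_point (he ▸ hN.mono (subset_insert _ _))⟩

/-- A regular Hausdorff space has a countable network iff it is a continuous image
of a separable metrizable space. -/
theorem cosmic_iff_continuous_image {X : Type u} [TopologicalSpace X] [T3Space X] :
    (∃ N : Set (Set X), N.Countable ∧ IsNetwork N) ↔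
      ∃ (Y : Type u) (_ : TopologicalSpace Y),
        TopologicalSpace.MetrizableSpace Y ∧ TopologicalSpace.SeparableSpace Y ∧
        ∃ f : Y → X, Continuous f ∧ Function.Surjective f := by
  constructor
  · rintro ⟨N, hNc, hN⟩
    obtain ⟨Z, f, hf, hsurj⟩ := exists_continuous_surjective_of_countable_network hNc hN
    have : SecondCountableTopology (ULift.{u} Z) := IsEmbedding.uliftDown.secondCountableTopology
    exact ⟨ULift Z, inferInstance, IsEmbedding.uliftDown.metrizableSpace, inferInstance,
      f ∘ ULift.down, hf.comp continuous_uliftDown, hsurj.comp ULift.down_surjective⟩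
  · rintro ⟨Y, _, _, _, f, hf, hsurj⟩
    let := metrizableSpaceMetric Y
    have := UniformSpace.secondCountable_of_separable Y
    obtain ⟨B, hBc, -, hB⟩ := exists_countable_basis Y
    exact ⟨_, hBc.image _, hB.isNetwork.image hf hsurj⟩
end

section
/- Every compact Hausdorff space with countable tightness contains no free sequence of length ω₁; more precisely, in a compact Hausdorff space X the supremum of lengths of free sequences equals the tightness of X. -/
open Cardinal

/-- `f : α → X` (with `α` well-ordered) is a free sequence: for every `b`,
the closure of the initial part is disjoint from the closure of the final part. -/
def IsFreeSequence {X : Type u} [TopologicalSpace X] {α : Type u} [LinearOrder α]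
    (f : α → X) : Prop :=
  ∀ b : α, closure (f '' {a | a < b}) ∩ closure (f '' {a | b ≤ a}) = ∅

/-- The tightness `t(X)`: the least infinite cardinal `κ` such that whenever
`x ∈ closure A` there is `B ⊆ A` with `#B ≤ κ` and `x ∈ closure B`. -/
noncomputable def tightness (X : Type u) [TopologicalSpace X] : Cardinal.{u} :=
  sInf {κ | Cardinal.aleph0 ≤ κ ∧ ∀ (A : Set X) (x : X), x ∈ closure A →
    ∃ B ⊆ A, #B ≤ κ ∧ x ∈ closure B}

/-!
If `t(X) ≤ κ`, a free sequence indexed by `κ⁺` is impossible: by compactness some `z` lies in the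
closure of every tail, hence in the closure of at most `κ` terms of the sequence; as `κ⁺` is
regular, these terms all come before some index `b`, and `z` witnesses that the closures of the
parts before and after `b` meet.

Conversely, let `p ∈ closure A` lie outside the `κ`-closure of `A` (the union of the closures of
the subsets of `A` of size `≤ κ`). By recursion over `i < κ⁺`, pick `x i` in the `κ`-closure of
`A` and in closed neighbourhoods of `p` missing the closures of the initial segments
`{x k | k < j}`, `j ≤ i`; these closures avoid `p` because they stay inside the `κ`-closure. A
choice is possible since, by compactness, `≤ κ` closed neighbourhoods of `p` have a common point
in the `κ`-closure of `A`. The tail from `b` then lies in a closed set disjoint from the closure of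
the part before `b`, so `x` is a free sequence of length `κ⁺`.
-/

open Set Filter Topology Order

section

variable {X : Type u} [TopologicalSpace X]

theorem IsFreeSequence.disjoint {α : Type u} [LinearOrder α] {f : α → X}
    (hf : IsFreeSequence f) (b : α) : Disjoint (closure (f '' Iio b)) (closure (f '' Ici b)) :=
  disjoint_iff_inter_eq_empty.2 (hf b)

theorem IsFreeSequence.injective {α : Type u} [LinearOrder α] {f : α → X}
    (hf : IsFreeSequence f) : Function.Injective f :=
  .of_lt_imp_ne fun a b hab heq => (hf.disjoint b).ne_of_mem
    (subset_closure ⟨a, hab, rfl⟩) (subset_closure ⟨b, le_rfl, rfl⟩) heq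

theorem IsFreeSequence.comp_strictMono {α β : Type u} [LinearOrder α] [LinearOrder β]
    {f : β → X} (hf : IsFreeSequence f) {e : α → β} (he : StrictMono e) :
    IsFreeSequence (f ∘ e) := fun b => by
  refine disjoint_iff_inter_eq_empty.1 ((hf.disjoint (e b)).mono ?_ ?_) <;>
    rw [image_comp] <;> refine closure_mono (image_mono ?_) <;> rintro _ ⟨a, ha, rfl⟩
  exacts [he ha, he.monotone ha]

def kappaClosure (κ : Cardinal.{u}) (A : Set X) : Set X :=
  {x | ∃ B ⊆ A, #B ≤ κ ∧ x ∈ closure B}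

theorem closure_subset_kappaClosure {κ : Cardinal.{u}} (hκ : ℵ₀ ≤ κ) {A S : Set X}
    (hS : S ⊆ kappaClosure κ A) (hSκ : #S ≤ κ) : closure S ⊆ kappaClosure κ A := by
  choose B hBA hBκ hsB using fun s : S => hS s.2
  refine fun x hx => ⟨⋃ s, B s, iUnion_subset hBA, ?_, closure_minimal ?_ isClosed_closure hx⟩
  · calc #(⋃ s, B s) ≤ #S * ⨆ s, #(B s) := mk_iUnion_le B
      _ ≤ κ * κ := mul_le_mul' hSκ (ciSup_le' hBκ)
      _ = κ := mul_eq_self hκ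
  · exact fun s hs => closure_mono (subset_iUnion B ⟨s, hs⟩) (hsB ⟨s, hs⟩)

def IsTightnessBound (X : Type u) [TopologicalSpace X] (κ : Cardinal.{u}) : Prop :=
  ∀ A : Set X, closure A ⊆ kappaClosure κ A

theorem tightness_mem : tightness X ∈ {κ | ℵ₀ ≤ κ ∧ IsTightnessBound X κ} :=
  csInf_mem ⟨ℵ₀ ⊔ #X, le_sup_left, fun A _ hx =>
    ⟨A, subset_rfl, (mk_set_le A).trans le_sup_right, hx⟩⟩

theorem aleph0_le_tightness : ℵ₀ ≤ tightness X := tightness_mem.1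

theorem isTightnessBound_tightness : IsTightnessBound X (tightness X) := tightness_mem.2

theorem tightness_le {κ : Cardinal.{u}} (hκ : ℵ₀ ≤ κ) (h : IsTightnessBound X κ) :
    tightness X ≤ κ :=
  csInf_le' ⟨hκ, h⟩

theorem exists_forall_mem_closure_image_Ici [CompactSpace X] {α : Type*} [Preorder α]
    [IsDirectedOrder α] [Nonempty α] (f : α → X) : ∃ z, ∀ b, z ∈ closure (f '' Ici b) :=
  (exists_clusterPt_of_compactSpace (map f atTop)).imp fun _ =>
    mapClusterPt_atTop_iff_forall_mem_closure.1

end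

section

variable {κ : Cardinal.{u}}

instance : Nonempty (succ κ).ord.ToType :=
  Ordinal.nonempty_toType_iff.2 (by simp)

theorem mk_Iio_toType_ord_succ_le (i : (succ κ).ord.ToType) : #(Iio i) ≤ κ :=
  lt_succ_iff.1 (by simpa using mk_Iio_lt i)

theorem mk_Iic_toType_ord_succ_le (hκ : ℵ₀ ≤ κ) (i : (succ κ).ord.ToType) : #(Iic i) ≤ κ :=
  calc #(Iic i) = #(insert i (Iio i) : Set _) := by rw [Iio_insert]
    _ ≤ κ + 1 := mk_insert_le.trans (by gcongr; exact mk_Iio_toType_ord_succ_le i)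
    _ = κ := add_one_eq hκ

theorem exists_forall_lt_of_mk_le_toType_ord_succ (hκ : ℵ₀ ≤ κ)
    {s : Set (succ κ).ord.ToType} (hs : #s ≤ κ) : ∃ b, ∀ a ∈ s, a < b :=
  not_isCofinal_iff.1 fun hcof => (lt_succ κ).not_ge <| by
    simpa [Ordinal.cof_toType, (Cardinal.isRegular_succ hκ).cof_ord] using (cof_le hcof).trans hs

end

theorem mk_finset_le {ι : Type u} {κ : Cardinal.{u}} (hκ : ℵ₀ ≤ κ) (hι : #ι ≤ κ) :
    #(Finset ι) ≤ κ :=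
  calc #(Finset ι) ≤ #(List ι) := by classical exact mk_le_of_surjective List.toFinset_surjective
    _ ≤ ℵ₀ ⊔ #ι := mk_list_le_max ι
    _ ≤ κ := sup_le hκ hι

theorem exists_fun_forall_mem_of_nonempty {ι β : Type*} [Preorder ι] [WellFoundedLT ι]
    (P : (i : ι) → (Iio i → β) → Set β) (h : ∀ i g, (P i g).Nonempty) :
    ∃ x : ι → β, ∀ i, x i ∈ P i fun k => x k := by
  choose c hc using h
  refine ⟨wellFounded_lt.fix fun i g => c i fun k => g k k.2, fun i => ?_⟩
  rw [wellFounded_lt.fix_eq]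
  exact hc _ _

section

variable {X : Type u} [TopologicalSpace X] [CompactSpace X] {κ : Cardinal.{u}}

theorem nonempty_kappaClosure_inter_iInter (hκ : ℵ₀ ≤ κ) {A : Set X} {p : X}
    (hp : p ∈ closure A) {ι : Type u} (hι : #ι ≤ κ) {N : ι → Set X} (hN : ∀ i, N i ∈ 𝓝 p)
    (hNc : ∀ i, IsClosed (N i)) : (kappaClosure κ A ∩ ⋂ i, N i).Nonempty := by
  have hF (F : Finset ι) : ∃ x ∈ A, ∀ i ∈ F, x ∈ N i :=
    (mem_closure_iff_nhds.1 hp _ ((biInter_finset_mem F).2 fun i _ => hN i)).imp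
      fun _ ⟨hxN, hxA⟩ => ⟨hxA, mem_iInter₂.1 hxN⟩
  choose x hxA hxN using hF
  obtain ⟨z, hz⟩ := exists_forall_mem_closure_image_Ici x
  refine ⟨z, ⟨range x, range_subset_iff.2 hxA, ?_, ?_⟩, mem_iInter.2 fun i => ?_⟩
  · exact mk_range_le.trans (mk_finset_le hκ hι)
  · exact closure_mono (image_subset_range _ _) (hz ∅)
  · refine (hNc i).closure_subset_iff.2 ?_ (hz {i})
    rintro _ ⟨F, hF, rfl⟩
    exact hxN F i (hF (Finset.mem_singleton_self i))

theorem exists_isFreeSequence_of_notMem_kappaClosure [RegularSpace X] (hκ : ℵ₀ ≤ κ)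
    {A : Set X} {p : X} (hpA : p ∈ closure A) (hp : p ∉ kappaClosure κ A) :
    ∃ f : (succ κ).ord.ToType → X, IsFreeSequence f := by
  have hN (S : Set X) : ∃ N ∈ 𝓝 p, IsClosed N ∧ (p ∉ closure S → Disjoint N (closure S)) := by
    by_cases hS : p ∈ closure S
    · exact ⟨univ, univ_mem, isClosed_univ, absurd hS⟩
    · obtain ⟨N, hNp, hNc, hNS⟩ :=
        exists_mem_nhds_isClosed_subset (isClosed_closure.isOpen_compl.mem_nhds hS)
      exact ⟨N, hNp, hNc, fun _ => subset_compl_iff_disjoint_right.1 hNS⟩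
  choose N hNp hNc hNS using hN
  obtain ⟨x, hx⟩ := exists_fun_forall_mem_of_nonempty
    (fun i (g : Iio i → X) => kappaClosure κ A ∩
      ⋂ j : Iic i, N (range fun k : Iio j.1 => g ⟨k.1, k.2.trans_le j.2⟩))
    fun i _ => nonempty_kappaClosure_inter_iInter hκ hpA (mk_Iic_toType_ord_succ_le hκ i)
      (fun _ => hNp _) (fun _ => hNc _)
  refine ⟨x, fun b => disjoint_iff_inter_eq_empty.1 ?_⟩
  have hS : x '' Iio b ⊆ kappaClosure κ A := image_subset_iff.2 fun a _ => (hx a).1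
  have hpS : p ∉ closure (x '' Iio b) := fun h =>
    hp (closure_subset_kappaClosure hκ hS (mk_image_le.trans (mk_Iio_toType_ord_succ_le b)) h)
  refine (hNS _ hpS).symm.mono_right ((hNc _).closure_subset_iff.2 ?_)
  rintro _ ⟨a, ha, rfl⟩
  rw [image_eq_range]
  exact mem_iInter.1 (hx a).2 ⟨b, ha⟩

theorem not_isFreeSequence_toType_ord_succ (hκ : ℵ₀ ≤ κ) (ht : IsTightnessBound X κ)
    (g : (succ κ).ord.ToType → X) : ¬IsFreeSequence g := fun hg => by
  obtain ⟨z, hz⟩ := exists_forall_mem_closure_image_Ici g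
  obtain ⟨B, hBg, hBκ, hzB⟩ :=
    ht (range g) (closure_mono (image_subset_range _ _) (hz (Classical.arbitrary _)))
  obtain ⟨b, hb⟩ := exists_forall_lt_of_mk_le_toType_ord_succ hκ
    ((mk_preimage_of_injective g B hg.injective).trans hBκ)
  have hBb : B ⊆ g '' Iio b := fun y hy => by
    obtain ⟨a, rfl⟩ := hBg hy
    exact ⟨a, hb a hy, rfl⟩
  exact (hg.disjoint b).ne_of_mem (closure_mono hBb hzB) (hz b) rfl

theorem IsFreeSequence.mk_le_of_isTightnessBound (hκ : ℵ₀ ≤ κ) (ht : IsTightnessBound X κ)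
    {α : Type u} [LinearOrder α] [WellFoundedLT α] {f : α → X} (hf : IsFreeSequence f) :
    #α ≤ κ := by
  by_contra! hlt
  obtain ⟨e⟩ : Nonempty
      (((· < ·) : (succ κ).ord.ToType → _ → Prop) ↪r ((· < ·) : α → α → Prop)) := by
    rw [← Ordinal.type_le_iff', Ordinal.type_toType, ord_le, Ordinal.card_type]
    exact succ_le_of_lt hlt
  exact not_isFreeSequence_toType_ord_succ hκ ht _ (hf.comp_strictMono fun _ _ => e.map_rel_iff.2)

theorem isTightnessBound_of_forall_isFreeSequence [RegularSpace X] (hκ : ℵ₀ ≤ κ)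
    (h : ∀ (α : Type u) [LinearOrder α] [WellFoundedLT α] (f : α → X),
      IsFreeSequence f → #α ≤ κ) :
    IsTightnessBound X κ := fun A p hp => by
  by_contra hpA
  obtain ⟨f, hf⟩ := exists_isFreeSequence_of_notMem_kappaClosure hκ hp hpA
  simpa using (h _ f hf).trans_lt (lt_succ κ)

end

/-- Arhangel'skii: in a compact Hausdorff space, the supremum of the lengths of free
sequences equals the tightness. In particular, a compact Hausdorff space of countable
tightness contains no free sequence of length `ω₁`. -/
theorem tightness_eq_sup_free_sequences {X : Type u} [TopologicalSpace X]
    [CompactSpace X] [T2Space X] :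
    Cardinal.aleph0 ⊔ sSup {c : Cardinal.{u} |
      ∃ (α : Type u) (_ : LinearOrder α) (_ : IsWellOrder α (· < ·)) (f : α → X),
        IsFreeSequence f ∧ #α = c} = tightness X := by
  set S := {c : Cardinal.{u} |
      ∃ (α : Type u) (_ : LinearOrder α) (_ : IsWellOrder α (· < ·)) (f : α → X),
        IsFreeSequence f ∧ #α = c}
  have hS : BddAbove S := ⟨#X, by
    rintro _ ⟨α, _, _, f, hf, rfl⟩
    exact mk_le_of_injective hf.injective⟩
  refine le_antisymm (sup_le aleph0_le_tightness (csSup_le' ?_)) (tightness_le le_sup_left ?_)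
  · rintro _ ⟨α, _, _, f, hf, rfl⟩
    exact hf.mk_le_of_isTightnessBound aleph0_le_tightness isTightnessBound_tightness
  · exact isTightnessBound_of_forall_isFreeSequence le_sup_left fun α _ _ f hf =>
      le_sup_of_le_right (le_csSup hS ⟨α, inferInstance, inferInstance, f, hf, rfl⟩)
end
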